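/- arXiv:2411.02658 — 2 statements merged into one kernel-verified Lean document; each statement's English description precedes it below -/
import Mathlib

section
/- Let k ≥ 1, let G' be a k-sparsifier of a finite graph G, and let (T,bag) be a k-lean tree decomposition of G'. Then (T,bag) is also a k-lean tree decomposition of G. -/
/-!
Leanness only speaks about separators, and a separator of `G` is one of its subgraph `G'`, so it
transfers directly. Of the tree-decomposition axioms only edge coverage is at stake: if an edge
`uv` of `G` lies in no bag, walk in `T` from a bag of `u` to a bag of `v` and let `st` be the edge
where `u` leaves the bags. The unions of the bags on the two sides of `st` form a vertex cut of
`G'` whose separator lies in the adhesion at `st`, so it has order `< k` and is a cut of `G` too;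
but it separates `u` from `v`.
-/

open Finset SimpleGraph

variable {V : Type} [Fintype V] [DecidableEq V]

/-- `(A, B)` is a vertex cut of `G`. -/
def IsVertexCut (G : SimpleGraph V) (A B : Finset V) : Prop :=
  A ∪ B = Finset.univ ∧
  ∀ u v : V, u ∈ A → u ∉ B → v ∈ B → v ∉ A → ¬ G.Adj u v

/-- `G'` is a `k`-sparsifier of `G`: a subgraph on the same vertex set such that every
vertex cut of `G'` of order `< k` is also a vertex cut of `G`. -/
def IsSparsifier (G G' : SimpleGraph V) (k : ℕ) : Prop :=
  G' ≤ G ∧ ∀ A B : Finset V, IsVertexCut G' A B → (A ∩ B).card < k → IsVertexCut G A B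

/-- `(T, bag)` is a tree decomposition of the graph `G`. -/
def IsTreeDecomp (G : SimpleGraph V) {W : Type} (T : SimpleGraph W)
    (bag : W → Finset V) : Prop :=
  T.IsTree ∧
  (∀ u v : V, G.Adj u v → ∃ t : W, u ∈ bag t ∧ v ∈ bag t) ∧
  (∀ v : V, (T.induce {t : W | v ∈ bag t}).Connected)

/-- `S` is an `(X1, X2)`-separator in `G`. -/
def IsSeparator (G : SimpleGraph V) (X1 X2 S : Finset V) : Prop :=
  ∀ u v : V, u ∈ X1 → v ∈ X2 → ∀ p : G.Walk u v, ∃ w ∈ p.support, w ∈ S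

/-- The tree decomposition `(T, bag)` of `G` is `k`-lean. -/
def IsKLean (G : SimpleGraph V) {W : Type} (T : SimpleGraph W)
    (bag : W → Finset V) (k : ℕ) : Prop :=
  (∀ a b : W, T.Adj a b → (bag a ∩ bag b).card < k) ∧
  (∀ t1 t2 : W, ∀ X1 X2 : Finset V, X1 ⊆ bag t1 → X2 ⊆ bag t2 →
    ∀ S : Finset V, IsSeparator G X1 X2 S →
      S.card < min (min X1.card X2.card) k →
      ∃ p : T.Walk t1 t2, p.IsPath ∧
        ∃ a b : W, s(a, b) ∈ p.edges ∧ (bag a ∩ bag b).card ≤ S.card)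

namespace SimpleGraph

variable {W : Type*} {T : SimpleGraph W} {s t : W}

theorem Walk.reachable_deleteEdges_or_of_reachable_deleteEdges_or {a b : W} (p : T.Walk a b)
    (hb : (T.deleteEdges {s(s, t)}).Reachable b s ∨ (T.deleteEdges {s(s, t)}).Reachable b t) :
    (T.deleteEdges {s(s, t)}).Reachable a s ∨ (T.deleteEdges {s(s, t)}).Reachable a t := by
  induction p with
  | nil => exact hb
  | @cons a c b hac q ih =>
    by_cases he : s(a, c) = s(s, t)
    · rcases Sym2.eq_iff.mp he with ⟨rfl, -⟩ | ⟨rfl, -⟩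
      · exact Or.inl .rfl
      · exact Or.inr .rfl
    · have hac' : (T.deleteEdges {s(s, t)}).Adj a c := deleteEdges_adj.mpr ⟨hac, he⟩
      exact (ih hb).imp hac'.reachable.trans hac'.reachable.trans

theorem Preconnected.reachable_deleteEdges_or (hT : T.Preconnected) (s t w : W) :
    (T.deleteEdges {s(s, t)}).Reachable w s ∨ (T.deleteEdges {s(s, t)}).Reachable w t :=
  (hT w s).some.reachable_deleteEdges_or_of_reachable_deleteEdges_or (Or.inl .rfl)

theorem Preconnected.reachable_deleteEdges_of_induce {S : Set W} (hS : (T.induce S).Preconnected)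
    (hst : ¬(s ∈ S ∧ t ∈ S)) {a b : W} (ha : a ∈ S) (hb : b ∈ S) :
    (T.deleteEdges {s(s, t)}).Reachable a b := by
  let φ : T.induce S →g T.deleteEdges {s(s, t)} :=
    ⟨Subtype.val, fun {x y} hxy => deleteEdges_adj.mpr ⟨hxy, fun he => hst <| by
      rcases Sym2.eq_iff.mp (Set.mem_singleton_iff.mp he) with ⟨rfl, rfl⟩ | ⟨rfl, rfl⟩
      exacts [⟨x.2, y.2⟩, ⟨y.2, x.2⟩]⟩⟩
  exact (hS ⟨a, ha⟩ ⟨b, hb⟩).map φ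

theorem Walk.IsPath.exists_adj_boundary {P : W → Prop} {a b : W} {p : T.Walk a b}
    (hp : p.IsPath) (ha : P a) (hb : ¬P b) :
    ∃ s t, T.Adj s t ∧ P s ∧ ¬P t ∧ (T.deleteEdges {s(s, t)}).Reachable b t := by
  induction p with
  | nil => exact absurd ha hb
  | @cons a c b hac q ih =>
    rw [Walk.cons_isPath_iff] at hp
    by_cases hc : P c
    · exact ih hp.1 hc hb
    · refine ⟨a, c, hac, ha, hc, ⟨(q.toDeleteEdge _ fun he => ?_).reverse⟩⟩
      exact hp.2 (q.fst_mem_support_of_mem_edges he)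

end SimpleGraph

section TreeDecomp

variable {α W : Type} {T : SimpleGraph W} {bag : W → Finset α} {s t : W} {x : α}

open Classical in
noncomputable def bagsOnSide [Fintype α] (T : SimpleGraph W) (bag : W → Finset α) (s t : W) :
    Finset α :=
  {x | ∃ w, (T.deleteEdges {s(s, t)}).Reachable w s ∧ x ∈ bag w}

theorem mem_bagsOnSide [Fintype α] :
    x ∈ bagsOnSide T bag s t ↔
      ∃ w, (T.deleteEdges {s(s, t)}).Reachable w s ∧ x ∈ bag w := by
  simp [bagsOnSide]

theorem mem_bagsOnSide_swap [Fintype α] :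
    x ∈ bagsOnSide T bag t s ↔
      ∃ w, (T.deleteEdges {s(s, t)}).Reachable w t ∧ x ∈ bag w := by
  rw [mem_bagsOnSide, Sym2.eq_swap]

variable {G : SimpleGraph α}

theorem IsTreeDecomp.exists_mem_bag (hTD : IsTreeDecomp G T bag) (x : α) : ∃ w, x ∈ bag w :=
  let ⟨⟨w, hw⟩⟩ := (hTD.2.2 x).nonempty
  ⟨w, hw⟩

theorem IsTreeDecomp.bagsOnSide_inter_subset [Fintype α] [DecidableEq α]
    (hTD : IsTreeDecomp G T bag) (hst : T.Adj s t) :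
    bagsOnSide T bag s t ∩ bagsOnSide T bag t s ⊆ bag s ∩ bag t := by
  intro x hx
  obtain ⟨w₁, hw₁s, hxw₁⟩ := mem_bagsOnSide.mp (mem_inter.mp hx).1
  obtain ⟨w₂, hw₂t, hxw₂⟩ := mem_bagsOnSide_swap.mp (mem_inter.mp hx).2
  have hbridge : ¬(T.deleteEdges {s(s, t)}).Reachable s t :=
    isBridge_iff.mp (isAcyclic_iff_forall_adj_isBridge.mp hTD.1.isAcyclic hst)
  -- otherwise the subtree of bags containing `x` avoids the bridge `st` yet meets both its sides
  by_contra hxst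
  have hw₁₂ := (hTD.2.2 x).preconnected.reachable_deleteEdges_of_induce
    (S := {w | x ∈ bag w}) (by simpa using hxst) hxw₁ hxw₂
  exact hbridge (hw₁s.symm.trans (hw₁₂.trans hw₂t))

theorem IsTreeDecomp.isVertexCut_bagsOnSide [Fintype α] [DecidableEq α]
    (hTD : IsTreeDecomp G T bag) (s t : W) :
    IsVertexCut G (bagsOnSide T bag s t) (bagsOnSide T bag t s) := by
  have hside := hTD.1.connected.preconnected.reachable_deleteEdges_or s t
  refine ⟨eq_univ_of_forall fun x => ?_, fun u v _ huB _ hvA huv => ?_⟩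
  · obtain ⟨w, hxw⟩ := hTD.exists_mem_bag x
    rcases hside w with hw | hw
    · exact mem_union_left _ (mem_bagsOnSide.mpr ⟨w, hw, hxw⟩)
    · exact mem_union_right _ (mem_bagsOnSide_swap.mpr ⟨w, hw, hxw⟩)
  · obtain ⟨w, huw, hvw⟩ := hTD.2.1 u v huv
    rcases hside w with hw | hw
    · exact hvA (mem_bagsOnSide.mpr ⟨w, hw, hvw⟩)
    · exact huB (mem_bagsOnSide_swap.mpr ⟨w, hw, huw⟩)

theorem IsTreeDecomp.of_isSparsifier [Fintype α] [DecidableEq α] {G' : SimpleGraph α} {k : ℕ}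
    (hTD : IsTreeDecomp G' T bag) (hsp : IsSparsifier G G' k)
    (hadh : ∀ a b, T.Adj a b → (bag a ∩ bag b).card < k) :
    IsTreeDecomp G T bag := by
  refine ⟨hTD.1, fun u v huv => ?_, hTD.2.2⟩
  by_contra! hno
  obtain ⟨tu, hutu⟩ := hTD.exists_mem_bag u
  obtain ⟨tv, hvtv⟩ := hTD.exists_mem_bag v
  obtain ⟨p, hp⟩ := hTD.1.connected.preconnected.exists_isPath tu tv
  obtain ⟨s, t, hst, hus, hut, htvt⟩ :=
    hp.exists_adj_boundary (P := fun w => u ∈ bag w) hutu (fun hutv => hno tv hutv hvtv)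
  have hinter := hTD.bagsOnSide_inter_subset hst
  have hcut : IsVertexCut G (bagsOnSide T bag s t) (bagsOnSide T bag t s) :=
    hsp.2 _ _ (hTD.isVertexCut_bagsOnSide s t) ((card_le_card hinter).trans_lt (hadh s t hst))
  have huA : u ∈ bagsOnSide T bag s t := mem_bagsOnSide.mpr ⟨s, .rfl, hus⟩
  have hvB : v ∈ bagsOnSide T bag t s := mem_bagsOnSide_swap.mpr ⟨tv, htvt, hvtv⟩
  refine hcut.2 u v huA (fun huB => ?_) hvB (fun hvA => ?_) huv
  · exact hut (mem_inter.mp (hinter (mem_inter.mpr ⟨huA, huB⟩))).2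
  · exact hno s hus (mem_inter.mp (hinter (mem_inter.mpr ⟨hvA, hvB⟩))).1

theorem IsSeparator.of_le {G' : SimpleGraph α} (hle : G' ≤ G) {X₁ X₂ S : Finset α}
    (hsep : IsSeparator G X₁ X₂ S) : IsSeparator G' X₁ X₂ S := fun u v hu hv p => by
  simpa only [Walk.support_mapLe_eq_support] using hsep u v hu hv (p.mapLe hle)

theorem IsKLean.of_le [DecidableEq α] {G' : SimpleGraph α} (hle : G' ≤ G) {k : ℕ}
    (hlean : IsKLean G' T bag k) :
    IsKLean G T bag k :=
  ⟨hlean.1, fun t₁ t₂ X₁ X₂ h₁ h₂ S hsep hcard =>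
    hlean.2 t₁ t₂ X₁ X₂ h₁ h₂ S (hsep.of_le hle) hcard⟩

end TreeDecomp

theorem sparsifier_kLean_general {W : Type} (G G' : SimpleGraph V) (k : ℕ)
    (hsp : IsSparsifier G G' k)
    (T : SimpleGraph W) (bag : W → Finset V)
    (hTD : IsTreeDecomp G' T bag) (hlean : IsKLean G' T bag k) :
    IsTreeDecomp G T bag ∧ IsKLean G T bag k :=
  ⟨hTD.of_isSparsifier hsp hlean.1, hlean.of_le hsp.1⟩

/-- If `G'` is a `k`-sparsifier of `G` (with `k ≥ 1`) and `(T, bag)` is a `k`-lean tree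
decomposition of `G'`, then `(T, bag)` is also a `k`-lean tree decomposition of `G`. -/
theorem sparsifier_kLean {W : Type} [Fintype W] (G G' : SimpleGraph V) (k : ℕ)
    (hk : 1 ≤ k) (hsp : IsSparsifier G G' k)
    (T : SimpleGraph W) (bag : W → Finset V)
    (hTD : IsTreeDecomp G' T bag) (hlean : IsKLean G' T bag k) :
    IsTreeDecomp G T bag ∧ IsKLean G T bag k :=
  sparsifier_kLean_general G G' k hsp T bag hTD hlean
end

section
/- Transitivity of tri-well-linkedness: let G be a hypergraph, let A ⊊ E(G) be tri-well-linked in G, and let B ⊆ E(G ◁ A) be tri-well-linked in G ◁ A. Then B ▷ A is tri-well-linked (in particular, well-linked) in G. -/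
open Finset

variable {V E : Type} [Fintype V] [DecidableEq V] [Fintype E] [DecidableEq E]

/-- `V(A)`: the union of the vertex sets of the hyperedges in `A`. -/
def hVerts (inc : E → Finset V) (A : Finset E) : Finset V :=
  A.biUnion inc

/-- The border `bd(A) = V(A) ∩ V(Ā)` of a set of hyperedges. -/
def hBd (inc : E → Finset V) (A : Finset E) : Finset V :=
  hVerts inc A ∩ hVerts inc Aᶜ

/-- The order function `λ(A) = |bd(A)|`. -/
def hLam (inc : E → Finset V) (A : Finset E) : ℕ :=
  (hBd inc A).card

/-- `A` is well-linked: for every bipartition `(B1, B2)` of `A`, `λ(B1) ≥ λ(A)` or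
`λ(B2) ≥ λ(A)`. -/
def WellLinked (inc : E → Finset V) (A : Finset E) : Prop :=
  ∀ B1 B2 : Finset E, Disjoint B1 B2 → B1 ∪ B2 = A →
    hLam inc A ≤ hLam inc B1 ∨ hLam inc A ≤ hLam inc B2

/-- `A` is tri-well-linked: for every tripartition `(B1, B2, B3)` of `A` there is
`i ∈ {1,2,3}` with `λ(Bi) ≥ λ(A)`. -/
def TriWellLinked (inc : E → Finset V) (A : Finset E) : Prop :=
  ∀ B1 B2 B3 : Finset E, Disjoint B1 B2 → Disjoint B1 B3 → Disjoint B2 B3 →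
    B1 ∪ B2 ∪ B3 = A →
    hLam inc A ≤ hLam inc B1 ∨ hLam inc A ≤ hLam inc B2 ∨ hLam inc A ≤ hLam inc B3

/-- The incidence map of the hypergraph `G ◁ A`. -/
def quotInc (inc : E → Finset V) (A : Finset E) :
    Option {e : E // e ∉ A} → Finset V
  | none => hBd inc A
  | some e => inc e.val

/-- `B ▷ A`: the set of hyperedges of `G` corresponding to `B ⊆ E(G ◁ A)`. -/
def hPush (A : Finset E) (B : Finset (Option {e : E // e ∉ A})) : Finset E :=
  B.biUnion fun x => x.elim A fun e => {e.val}

set_option linter.unusedSectionVars false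
set_option linter.unusedVariables false

-- ### auxiliary lemmas
lemma mem_hBd {inc : E → Finset V} {A : Finset E} {v : V} :
    v ∈ hBd inc A ↔ (∃ e ∈ A, v ∈ inc e) ∧ (∃ e, e ∉ A ∧ v ∈ inc e) := by
  simp [hBd, hVerts]

lemma hBd_compl (inc : E → Finset V) (A : Finset E) : hBd inc Aᶜ = hBd inc A := by
  simp [hBd, compl_compl, inter_comm]

lemma hLam_compl (inc : E → Finset V) (A : Finset E) : hLam inc Aᶜ = hLam inc A := by
  simp [hLam, hBd_compl]

lemma hLam_empty (inc : E → Finset V) : hLam inc (∅ : Finset E) = 0 := by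
  simp [hLam, hBd, hVerts]

lemma hLam_submod (inc : E → Finset V) (X Y : Finset E) :
    hLam inc (X ∪ Y) + hLam inc (X ∩ Y) ≤ hLam inc X + hLam inc Y := by
  have h1 : hBd inc (X ∪ Y) ∪ hBd inc (X ∩ Y) ⊆ hBd inc X ∪ hBd inc Y := by
    intro v hv
    rcases mem_union.mp hv with hv | hv <;> rw [mem_hBd] at hv <;>
      obtain ⟨⟨e, he, hve⟩, ⟨f, hf, hvf⟩⟩ := hv <;> simp only [mem_union, mem_inter] at he hf
    · rcases he with he | he
      · exact mem_union_left _ (mem_hBd.mpr ⟨⟨e, he, hve⟩, ⟨f, fun h => hf (Or.inl h), hvf⟩⟩)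
      · exact mem_union_right _ (mem_hBd.mpr ⟨⟨e, he, hve⟩, ⟨f, fun h => hf (Or.inr h), hvf⟩⟩)
    · rcases not_and_or.mp hf with hf' | hf'
      · exact mem_union_left _ (mem_hBd.mpr ⟨⟨e, he.1, hve⟩, ⟨f, hf', hvf⟩⟩)
      · exact mem_union_right _ (mem_hBd.mpr ⟨⟨e, he.2, hve⟩, ⟨f, hf', hvf⟩⟩)
  have h2 : hBd inc (X ∪ Y) ∩ hBd inc (X ∩ Y) ⊆ hBd inc X ∩ hBd inc Y := by
    intro v hv
    rw [mem_inter, mem_hBd, mem_hBd] at hv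
    obtain ⟨⟨_, f, hf, hvf⟩, ⟨e, he, hve⟩, _⟩ := hv
    simp only [mem_union, not_or] at hf
    rw [mem_inter] at he
    exact mem_inter.mpr ⟨mem_hBd.mpr ⟨⟨e, he.1, hve⟩, ⟨f, hf.1, hvf⟩⟩,
      mem_hBd.mpr ⟨⟨e, he.2, hve⟩, ⟨f, hf.2, hvf⟩⟩⟩
  calc hLam inc (X ∪ Y) + hLam inc (X ∩ Y)
      = (hBd inc (X ∪ Y) ∪ hBd inc (X ∩ Y)).card + (hBd inc (X ∪ Y) ∩ hBd inc (X ∩ Y)).card := by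
        rw [card_union_add_card_inter]; rfl
    _ ≤ (hBd inc X ∪ hBd inc Y).card + (hBd inc X ∩ hBd inc Y).card :=
        Nat.add_le_add (card_le_card h1) (card_le_card h2)
    _ = hLam inc X + hLam inc Y := by rw [card_union_add_card_inter]; rfl

lemma hLam_posimod (inc : E → Finset V) (X Y : Finset E) :
    hLam inc (X \ Y) + hLam inc (Y \ X) ≤ hLam inc X + hLam inc Y := by
  have h := hLam_submod inc Xᶜ Y
  rw [hLam_compl] at h
  have e1 : Xᶜ ∪ Y = (X \ Y)ᶜ := by ext e; simp [mem_sdiff]; tauto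
  have e2 : Xᶜ ∩ Y = Y \ X := by ext e; simp [mem_sdiff]; tauto
  rw [e1, e2, hLam_compl] at h
  omega

lemma mem_hPush {A : Finset E} {B : Finset (Option {e : E // e ∉ A})} {e : E} :
    e ∈ hPush A B ↔ (none ∈ B ∧ e ∈ A) ∨ ∃ h : e ∉ A, some ⟨e, h⟩ ∈ B := by
  simp only [hPush, mem_biUnion]
  constructor
  · rintro ⟨x, hx, he⟩
    match x with
    | none => exact Or.inl ⟨hx, he⟩
    | some f =>
      simp only [Option.elim, mem_singleton] at he
      subst he
      exact Or.inr ⟨f.2, hx⟩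
  · rintro (⟨hn, he⟩ | ⟨h, hs⟩)
    · exact ⟨none, hn, he⟩
    · exact ⟨some ⟨e, h⟩, hs, by simp⟩

lemma mem_hVerts_quot {inc : E → Finset V} {A : Finset E}
    {D : Finset (Option {e : E // e ∉ A})} {v : V} :
    v ∈ hVerts (quotInc inc A) D ↔
      (none ∈ D ∧ v ∈ hBd inc A) ∨ ∃ (e : E) (h : e ∉ A), some ⟨e, h⟩ ∈ D ∧ v ∈ inc e := by
  simp only [hVerts, mem_biUnion]
  constructor
  · rintro ⟨x, hx, hv⟩
    match x with
    | none => exact Or.inl ⟨hx, hv⟩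
    | some f => exact Or.inr ⟨f.1, f.2, hx, hv⟩
  · rintro (⟨hn, hv⟩ | ⟨e, h, hs, hv⟩)
    · exact ⟨none, hn, hv⟩
    · exact ⟨some ⟨e, h⟩, hs, hv⟩

lemma hBd_quot (inc : E → Finset V) (A : Finset E) (D : Finset (Option {e : E // e ∉ A})) :
    hBd (quotInc inc A) D = hBd inc (hPush A D) := by
  ext v
  rw [hBd, hBd, mem_inter, mem_inter, mem_hVerts_quot, mem_hVerts_quot]
  have hq : ∀ x : Option {e : E // e ∉ A}, x ∈ Dᶜ ↔ x ∉ D := fun x => mem_compl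
  simp only [hq]
  have hVmem : ∀ S : Finset E, v ∈ hVerts inc S ↔ ∃ e ∈ S, v ∈ inc e := by
    intro S; simp [hVerts]
  rw [hVmem, hVmem]
  simp only [mem_compl, mem_hPush, mem_hBd, not_or]
  constructor
  · rintro ⟨h1, h2⟩
    constructor
    · rcases h1 with ⟨hn, ⟨e, he, hv⟩, _⟩ | ⟨e, h, hs, hv⟩
      · exact ⟨e, Or.inl ⟨hn, he⟩, hv⟩
      · exact ⟨e, Or.inr ⟨h, hs⟩, hv⟩
    · rcases h2 with ⟨hn, ⟨g, hg, hvg⟩, _⟩ | ⟨e, h, hs, hv⟩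
      · refine ⟨g, ⟨fun hnn => hn hnn.1, fun hex => hex.choose hg⟩, hvg⟩
      · refine ⟨e, ⟨fun hnn => h hnn.2, fun hex => hs hex.choose_spec⟩, hv⟩
  · rintro ⟨⟨e, he, hv⟩, ⟨f, ⟨hf1, hf2⟩, hvf⟩⟩
    have hfD : ∀ h : f ∉ A, some ⟨f, h⟩ ∉ D := fun h hs => hf2 ⟨h, hs⟩
    rcases he with ⟨hn, heA⟩ | ⟨h, hs⟩
    · by_cases hfA : f ∈ A
      · exact absurd ⟨hn, hfA⟩ hf1
      · exact ⟨Or.inl ⟨hn, ⟨e, heA, hv⟩, ⟨f, hfA, hvf⟩⟩,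
          Or.inr ⟨f, hfA, hfD hfA, hvf⟩⟩
    · by_cases hfA : f ∈ A
      · have hn : none ∉ D := fun hnn => hf1 ⟨hnn, hfA⟩
        exact ⟨Or.inr ⟨e, h, hs, hv⟩,
          Or.inl ⟨hn, ⟨f, hfA, hvf⟩, ⟨e, h, hv⟩⟩⟩
      · exact ⟨Or.inr ⟨e, h, hs, hv⟩, Or.inr ⟨f, hfA, hfD hfA, hvf⟩⟩

lemma hLam_quot (inc : E → Finset V) (A : Finset E) (D : Finset (Option {e : E // e ∉ A})) :
    hLam (quotInc inc A) D = hLam inc (hPush A D) := by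
  simp [hLam, hBd_quot]

-- ### lifting subsets of E to the quotient
def liftD (A : Finset E) (S : Finset E) : Finset (Option {e : E // e ∉ A}) :=
  (S \ A).attach.image fun e => some ⟨e.1, (mem_sdiff.mp e.2).2⟩

lemma none_not_mem_liftD {A S : Finset E} : none ∉ liftD A S := by
  simp [liftD]

lemma some_mem_liftD {A S : Finset E} {f : {e : E // e ∉ A}} :
    some f ∈ liftD A S ↔ f.val ∈ S := by
  simp only [liftD, mem_image, mem_attach, true_and, Subtype.exists, Option.some.injEq]
  constructor
  · rintro ⟨a, ha, heq⟩
    cases heq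
    exact (mem_sdiff.mp ha).1
  · intro hf
    exact ⟨f.1, mem_sdiff.mpr ⟨hf, f.2⟩, Subtype.ext rfl⟩

lemma hPush_liftD {A S : Finset E} : hPush A (liftD A S) = S \ A := by
  ext e
  rw [mem_hPush, mem_sdiff]
  simp only [none_not_mem_liftD, false_and, false_or]
  constructor
  · rintro ⟨h, hs⟩
    exact ⟨some_mem_liftD.mp hs, h⟩
  · rintro ⟨hS, h⟩
    exact ⟨h, some_mem_liftD.mpr hS⟩

lemma liftD_subset {A S : Finset E} {B : Finset (Option {e : E // e ∉ A})}
    (hS : S ⊆ hPush A B) : liftD A S ⊆ B := by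
  intro x hx
  match x with
  | none => exact absurd hx none_not_mem_liftD
  | some f =>
    have hf : f.val ∈ hPush A B := hS (some_mem_liftD.mp hx)
    rcases mem_hPush.mp hf with ⟨_, hfA⟩ | ⟨h, hs⟩
    · exact absurd hfA f.2
    · exact hs

lemma liftD_disjoint {A S T : Finset E} (h : Disjoint S T) :
    Disjoint (liftD A S) (liftD A T) := by
  rw [Finset.disjoint_left]
  intro x hx hx'
  match x with
  | none => exact none_not_mem_liftD hx
  | some f =>
    exact Finset.disjoint_left.mp h (some_mem_liftD.mp hx) (some_mem_liftD.mp hx')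

-- ### selection lemmas
lemma a_of_not_b {inc : E → Finset V} {A : Finset E} (hwlA : TriWellLinked inc A)
    {S : Finset E} (hS : S ⊆ A) (h : ¬ hLam inc A ≤ hLam inc (A \ S)) :
    hLam inc A ≤ hLam inc S := by
  rcases hwlA S (A \ S) ∅ disjoint_sdiff (disjoint_empty_right _) (disjoint_empty_right _)
      (by rw [union_empty, union_sdiff_of_subset hS]) with h1 | h2 | h3
  · exact h1
  · exact absurd h2 h
  · rw [hLam_empty] at h3
    omega

lemma not_b_pair {inc : E → Finset V} {A : Finset E} (hwlA : TriWellLinked inc A)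
    {S T : Finset E} (hS : S ⊆ A) (hT : T ⊆ A) (hST : Disjoint S T)
    (h1 : ¬ hLam inc A ≤ hLam inc (A \ S)) (h2 : ¬ hLam inc A ≤ hLam inc (A \ T)) :
    False := by
  have aS := a_of_not_b hwlA hS h1
  have aT := a_of_not_b hwlA hT h2
  have hp := hLam_posimod inc (A \ S) (A \ T)
  have e1 : (A \ S) \ (A \ T) = T := by
    ext e
    simp only [mem_sdiff, not_and, not_not]
    constructor
    · rintro ⟨⟨hA, _⟩, h3⟩
      exact h3 hA
    · intro hT'
      exact ⟨⟨hT hT', fun hS' => Finset.disjoint_left.mp hST hS' hT'⟩, fun _ => hT'⟩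
  have e2 : (A \ T) \ (A \ S) = S := by
    ext e
    simp only [mem_sdiff, not_and, not_not]
    constructor
    · rintro ⟨⟨hA, _⟩, h3⟩
      exact h3 hA
    · intro hS'
      exact ⟨⟨hS hS', fun hT' => Finset.disjoint_left.mp hST hS' hT'⟩, fun _ => hS'⟩
  rw [e1, e2] at hp
  omega

lemma sdiff_inter_right (A C : Finset E) : A \ (C ∩ A) = A \ C := by
  ext e; simp only [mem_sdiff, mem_inter]; tauto

lemma select {inc : E → Finset V} {A : Finset E} (hwlA : TriWellLinked inc A)
    (C1 C2 C3 : Finset E) (d12 : Disjoint C1 C2) (d13 : Disjoint C1 C3) (d23 : Disjoint C2 C3)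
    (hu : (C1 ∩ A) ∪ (C2 ∩ A) ∪ (C3 ∩ A) = A) :
    (hLam inc A ≤ hLam inc (C1 ∩ A) ∧ hLam inc A ≤ hLam inc (A \ C2) ∧ hLam inc A ≤ hLam inc (A \ C3)) ∨
    (hLam inc A ≤ hLam inc (C2 ∩ A) ∧ hLam inc A ≤ hLam inc (A \ C1) ∧ hLam inc A ≤ hLam inc (A \ C3)) ∨
    (hLam inc A ≤ hLam inc (C3 ∩ A) ∧ hLam inc A ≤ hLam inc (A \ C1) ∧ hLam inc A ≤ hLam inc (A \ C2)) := by
  have hs1 : C1 ∩ A ⊆ A := inter_subset_right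
  have hs2 : C2 ∩ A ⊆ A := inter_subset_right
  have hs3 : C3 ∩ A ⊆ A := inter_subset_right
  have e1 : A \ (C1 ∩ A) = A \ C1 := sdiff_inter_right A C1
  have e2 : A \ (C2 ∩ A) = A \ C2 := sdiff_inter_right A C2
  have e3 : A \ (C3 ∩ A) = A \ C3 := sdiff_inter_right A C3
  by_cases hb1 : hLam inc A ≤ hLam inc (A \ C1)
  · by_cases hb2 : hLam inc A ≤ hLam inc (A \ C2)
    · by_cases hb3 : hLam inc A ≤ hLam inc (A \ C3)
      · rcases hwlA (C1 ∩ A) (C2 ∩ A) (C3 ∩ A)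
            (d12.mono inter_subset_left inter_subset_left)
            (d13.mono inter_subset_left inter_subset_left)
            (d23.mono inter_subset_left inter_subset_left) hu with h | h | h
        · exact Or.inl ⟨h, hb2, hb3⟩
        · exact Or.inr (Or.inl ⟨h, hb1, hb3⟩)
        · exact Or.inr (Or.inr ⟨h, hb1, hb2⟩)
      · refine Or.inr (Or.inr ⟨a_of_not_b hwlA hs3 (by rwa [e3]), hb1, hb2⟩)
    · by_cases hb3 : hLam inc A ≤ hLam inc (A \ C3)
      · refine Or.inr (Or.inl ⟨a_of_not_b hwlA hs2 (by rwa [e2]), hb1, hb3⟩)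
      · exact (not_b_pair hwlA hs2 hs3
          (d23.mono inter_subset_left inter_subset_left) (by rwa [e2]) (by rwa [e3])).elim
  · by_cases hb2 : hLam inc A ≤ hLam inc (A \ C2)
    · by_cases hb3 : hLam inc A ≤ hLam inc (A \ C3)
      · exact Or.inl ⟨a_of_not_b hwlA hs1 (by rwa [e1]), hb2, hb3⟩
      · exact (not_b_pair hwlA hs1 hs3
          (d13.mono inter_subset_left inter_subset_left) (by rwa [e1]) (by rwa [e3])).elim
    · exact (not_b_pair hwlA hs1 hs2
        (d12.mono inter_subset_left inter_subset_left) (by rwa [e1]) (by rwa [e2])).elim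

-- ### main helper (the case `none ∈ B`, with the "good" part first)
lemma main_helper (inc : E → Finset V) (A : Finset E)
    (B : Finset (Option {e : E // e ∉ A}))
    (hwlB : TriWellLinked (quotInc inc A) B) (hnone : none ∈ B)
    (C1 C2 C3 : Finset E) (d12 : Disjoint C1 C2) (d13 : Disjoint C1 C3) (d23 : Disjoint C2 C3)
    (hu : C1 ∪ C2 ∪ C3 = hPush A B)
    (ha : hLam inc A ≤ hLam inc (C1 ∩ A))
    (hb2 : hLam inc A ≤ hLam inc (A \ C2))
    (hb3 : hLam inc A ≤ hLam inc (A \ C3)) :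
    hLam inc (hPush A B) ≤ hLam inc C1 ∨ hLam inc (hPush A B) ≤ hLam inc C2 ∨
      hLam inc (hPush A B) ≤ hLam inc C3 := by
  set D1 := liftD A C1 with hD1
  set D2 := liftD A C2 with hD2
  set D3 := liftD A C3 with hD3
  have hsub1 : D1 ⊆ B := liftD_subset (hu ▸ (subset_union_left.trans subset_union_left))
  have hsub2 : D2 ⊆ B := liftD_subset (hu ▸ (subset_union_right.trans subset_union_left))
  have hsub3 : D3 ⊆ B := liftD_subset (hu ▸ subset_union_right)
  have hBu : insert none D1 ∪ D2 ∪ D3 = B := by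
    apply Subset.antisymm
    · refine union_subset (union_subset ?_ hsub2) hsub3
      exact insert_subset hnone hsub1
    · intro x hx
      match x with
      | none => exact mem_union_left _ (mem_union_left _ (mem_insert_self _ _))
      | some f =>
        have hf : f.val ∈ hPush A B := mem_hPush.mpr (Or.inr ⟨f.2, hx⟩)
        rw [← hu] at hf
        rcases mem_union.mp hf with hf' | hf'
        · rcases mem_union.mp hf' with hf'' | hf''
          · exact mem_union_left _ (mem_union_left _
              (mem_insert_of_mem (some_mem_liftD.mpr hf'')))
          · exact mem_union_left _ (mem_union_right _ (some_mem_liftD.mpr hf''))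
        · exact mem_union_right _ (some_mem_liftD.mpr hf')
  have hd12 : Disjoint (insert none D1) D2 := by
    rw [disjoint_insert_left]
    exact ⟨none_not_mem_liftD, liftD_disjoint d12⟩
  have hd13 : Disjoint (insert none D1) D3 := by
    rw [disjoint_insert_left]
    exact ⟨none_not_mem_liftD, liftD_disjoint d13⟩
  have hd23 : Disjoint D2 D3 := liftD_disjoint d23
  have hP1 : hPush A (insert none D1) = A ∪ C1 := by
    rw [hPush, biUnion_insert]
    have : D1.biUnion (fun x => x.elim A fun e => {e.val}) = hPush A D1 := rfl
    rw [this, hD1, hPush_liftD]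
    simp only [Option.elim]
    rw [union_sdiff_self_eq_union]
  rcases hwlB (insert none D1) D2 D3 hd12 hd13 hd23 hBu with h | h | h
  · rw [hLam_quot, hLam_quot, hP1] at h
    have hsm := hLam_submod inc C1 A
    rw [union_comm C1 A] at hsm
    left; omega
  · rw [hLam_quot, hLam_quot, hD2, hPush_liftD] at h
    have hpm := hLam_posimod inc C2 A
    right; left; omega
  · rw [hLam_quot, hLam_quot, hD3, hPush_liftD] at h
    have hpm := hLam_posimod inc C3 A
    right; right; omega

-- ### the case `none ∉ B`
lemma main_nonone (inc : E → Finset V) (A : Finset E)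
    (B : Finset (Option {e : E // e ∉ A}))
    (hwlB : TriWellLinked (quotInc inc A) B) (hnone : none ∉ B)
    (C1 C2 C3 : Finset E) (d12 : Disjoint C1 C2) (d13 : Disjoint C1 C3) (d23 : Disjoint C2 C3)
    (hu : C1 ∪ C2 ∪ C3 = hPush A B) :
    hLam inc (hPush A B) ≤ hLam inc C1 ∨ hLam inc (hPush A B) ≤ hLam inc C2 ∨
      hLam inc (hPush A B) ≤ hLam inc C3 := by
  have hCA : ∀ e ∈ hPush A B, e ∉ A := by
    intro e he
    rcases mem_hPush.mp he with ⟨hn, _⟩ | ⟨h, _⟩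
    · exact absurd hn hnone
    · exact h
  have hsd : ∀ {S : Finset E}, S ⊆ hPush A B → S \ A = S := by
    intro S hS
    apply sdiff_eq_self_of_disjoint
    refine Finset.disjoint_left.mpr ?_
    intro a ha hA
    exact hCA a (hS ha) hA
  have hc1 : C1 ⊆ hPush A B := hu ▸ (subset_union_left.trans subset_union_left)
  have hc2 : C2 ⊆ hPush A B := hu ▸ (subset_union_right.trans subset_union_left)
  have hc3 : C3 ⊆ hPush A B := hu ▸ subset_union_right
  have hsub1 : liftD A C1 ⊆ B := liftD_subset hc1
  have hsub2 : liftD A C2 ⊆ B := liftD_subset hc2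
  have hsub3 : liftD A C3 ⊆ B := liftD_subset hc3
  have hBu : liftD A C1 ∪ liftD A C2 ∪ liftD A C3 = B := by
    apply Subset.antisymm
    · exact union_subset (union_subset hsub1 hsub2) hsub3
    · intro x hx
      match x with
      | none => exact absurd hx hnone
      | some f =>
        have hf : f.val ∈ hPush A B := mem_hPush.mpr (Or.inr ⟨f.2, hx⟩)
        rw [← hu] at hf
        rcases mem_union.mp hf with hf' | hf'
        · rcases mem_union.mp hf' with hf'' | hf''
          · exact mem_union_left _ (mem_union_left _ (some_mem_liftD.mpr hf''))
          · exact mem_union_left _ (mem_union_right _ (some_mem_liftD.mpr hf''))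
        · exact mem_union_right _ (some_mem_liftD.mpr hf')
  rcases hwlB _ _ _ (liftD_disjoint d12) (liftD_disjoint d13) (liftD_disjoint d23) hBu
      with h | h | h <;>
    rw [hLam_quot, hLam_quot, hPush_liftD] at h
  · rw [hsd hc1] at h; exact Or.inl h
  · rw [hsd hc2] at h; exact Or.inr (Or.inl h)
  · rw [hsd hc3] at h; exact Or.inr (Or.inr h)


set_option maxHeartbeats 1600000 in
/-- Transitivity of tri-well-linkedness: if `A ⊊ E(G)` is tri-well-linked in `G` and
`B ⊆ E(G ◁ A)` is tri-well-linked in `G ◁ A`, then `B ▷ A` is tri-well-linked (in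
particular, well-linked) in `G`. -/
theorem triWellLinked_transitive (inc : E → Finset V)
    (hcov : ∀ v : V, ∃ e : E, v ∈ inc e)
    (A : Finset E) (hA : A ≠ Finset.univ) (hwlA : TriWellLinked inc A)
    (B : Finset (Option {e : E // e ∉ A}))
    (hwlB : TriWellLinked (quotInc inc A) B) :
    TriWellLinked inc (hPush A B) ∧ WellLinked inc (hPush A B) := by
  have T : TriWellLinked inc (hPush A B) := by
    intro C1 C2 C3 d12 d13 d23 hu
    by_cases hn : none ∈ B
    · have hAC : A ⊆ hPush A B := fun e he => mem_hPush.mpr (Or.inl ⟨hn, he⟩)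
      have hu' : (C1 ∩ A) ∪ (C2 ∩ A) ∪ (C3 ∩ A) = A := by
        rw [← union_inter_distrib_right, ← union_inter_distrib_right, hu]
        exact inter_eq_right.mpr hAC
      rcases select hwlA C1 C2 C3 d12 d13 d23 hu' with ⟨ha, h2, h3⟩ | ⟨ha, h1, h3⟩ | ⟨ha, h1, h2⟩
      · exact main_helper inc A B hwlB hn C1 C2 C3 d12 d13 d23 hu ha h2 h3
      · have := main_helper inc A B hwlB hn C2 C1 C3 d12.symm d23 d13
          (by rw [union_comm C2 C1]; exact hu) ha h1 h3
        tauto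
      · have := main_helper inc A B hwlB hn C3 C1 C2 d13.symm d23.symm d12
          (by rw [union_comm C3 C1, union_assoc, union_comm C3 C2, ← union_assoc]; exact hu)
          ha h1 h2
        tauto
    · exact main_nonone inc A B hwlB hn C1 C2 C3 d12 d13 d23 hu
  refine ⟨T, ?_⟩
  intro B1 B2 d hu
  rcases T B1 B2 ∅ d (disjoint_empty_right _) (disjoint_empty_right _)
      (by rw [union_empty, hu]) with h | h | h
  · exact Or.inl h
  · exact Or.inr h
  · rw [hLam_empty] at h
    exact Or.inl (by omega)
end
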